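/- arXiv:2112.04110 — 4 statements merged into one kernel-verified Lean document; each statement's English description precedes it below -/
import Mathlib

section
/- Fix an integer N ≥ 1, pairwise distinct complex numbers u_1, …, u_N, an index m ∈ {1,…,N}, and complex numbers x, y, with x and y not in {u_1,…,u_N}. Then for 0 ≤ s ≤ N − 1: ∑_{k ≠ m} (u_k − y)^s / ((u_k − u_m) · ∏_{β ≠ k} (u_k − u_β)) = −s·(u_m − y)^{s−1} / ∏_{k ≠ m}(u_m − u_k) + (u_m − y)^s / ∏_{k ≠ m}(u_m − u_k) · ∑_{β ≠ m} 1/(u_m − u_β). -/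
open Finset Polynomial

private lemma deriv_fin_prod {ι R : Type*} [CommRing R] [DecidableEq ι] (s : Finset ι)
    (f : ι → R[X]) :
    derivative (∏ i ∈ s, f i) = ∑ i ∈ s, (∏ j ∈ s.erase i, f j) * derivative (f i) := by
  rw [Finset.prod_eq_multiset_prod, derivative_prod, Finset.sum_eq_multiset_sum]
  simp only [← Finset.erase_val, ← Finset.prod_eq_multiset_prod]

theorem stmt5 (N : ℕ) (hN : 1 ≤ N) (u : Fin N → ℂ) (hu : Function.Injective u)
    (m : Fin N) (x y : ℂ) (hx : ∀ k, x ≠ u k) (hy : ∀ k, y ≠ u k)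
    (s : ℕ) (hs : s ≤ N - 1) :
    ∑ k ∈ univ.erase m,
        (u k - y) ^ s / ((u k - u m) * ∏ β ∈ univ.erase k, (u k - u β)) =
      -(s : ℂ) * (u m - y) ^ (s - 1) / (∏ k ∈ univ.erase m, (u m - u k)) +
        (u m - y) ^ s / (∏ k ∈ univ.erase m, (u m - u k)) *
          ∑ β ∈ univ.erase m, 1 / (u m - u β) := by
  have hsub : ∀ {a b : Fin N}, a ≠ b → u a - u b ≠ 0 := fun {a b} h =>
    sub_ne_zero.mpr fun he => h (hu he)
  have hD : ∀ k : Fin N, (∏ β ∈ univ.erase k, (u k - u β)) ≠ 0 := by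
    intro k
    refine Finset.prod_ne_zero_iff.mpr fun β hβ => hsub ?_
    exact fun h => (mem_erase.mp hβ).1 h.symm
  -- Lagrange interpolation identity
  have lemA : ((X - C y) ^ s : ℂ[X]) =
      ∑ k : Fin N, C ((u k - y) ^ s * (∏ β ∈ univ.erase k, (u k - u β))⁻¹) *
        ∏ β ∈ univ.erase k, (X - C (u β)) := by
    apply Polynomial.eq_of_degrees_lt_of_eval_index_eq univ hu.injOn
    · have h1 : ((X - C y : ℂ[X]) ^ s).degree = s := by
        rw [degree_pow, degree_X_sub_C]
        simp
      rw [h1, card_univ, Fintype.card_fin]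
      exact_mod_cast (by omega : s < N)
    · refine lt_of_le_of_lt (degree_sum_le _ _) ?_
      rw [Finset.sup_lt_iff (by exact_mod_cast WithBot.bot_lt_coe (#(univ : Finset (Fin N))))]
      intro i _
      refine lt_of_le_of_lt (degree_mul_le _ _) ?_
      have h2 : (∏ β ∈ univ.erase i, (X - C (u β) : ℂ[X])).degree = ((N - 1 : ℕ) : WithBot ℕ) := by
        rw [degree_prod]
        simp [degree_X_sub_C, card_erase_of_mem, card_univ]
      calc (C ((u i - y) ^ s * (∏ β ∈ univ.erase i, (u i - u β))⁻¹)).degree +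
            (∏ β ∈ univ.erase i, (X - C (u β) : ℂ[X])).degree
          ≤ 0 + ((N - 1 : ℕ) : WithBot ℕ) := add_le_add degree_C_le h2.le
        _ = ((N - 1 : ℕ) : WithBot ℕ) := zero_add _
        _ < (#(univ : Finset (Fin N)) : WithBot ℕ) := by
            rw [card_univ, Fintype.card_fin]
            exact_mod_cast (by omega : N - 1 < N)
    · intro i _
      rw [eval_finset_sum, Finset.sum_eq_single i]
      · simp only [eval_mul, eval_C, eval_prod, eval_sub, eval_X, eval_pow]
        rw [mul_assoc, inv_mul_cancel₀ (hD i), mul_one]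
      · intro k _ hk
        simp only [eval_mul, eval_C, eval_prod, eval_sub, eval_X]
        apply mul_eq_zero_of_right
        refine Finset.prod_eq_zero (mem_erase.mpr ⟨hk.symm, mem_univ i⟩) ?_
        exact sub_self _
      · intro h; exact absurd (mem_univ i) h
  -- differentiate and evaluate at u m
  have key := congrArg (fun p : ℂ[X] => eval (u m) (derivative p)) lemA
  simp only [derivative_X_sub_C_pow, derivative_sum, derivative_C_mul, deriv_fin_prod,
    derivative_sub, derivative_X, derivative_C, sub_zero, mul_one, eval_finset_sum, eval_pow,
    eval_mul, eval_C, eval_prod, eval_sub, eval_X] at key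
  rw [← Finset.add_sum_erase _ _ (mem_univ m)] at key
  -- k ≠ m terms
  have hterm : ∀ k ∈ univ.erase m,
      (u k - y) ^ s * (∏ β ∈ univ.erase k, (u k - u β))⁻¹ *
        ∑ α ∈ univ.erase k, ∏ β ∈ (univ.erase k).erase α, (u m - u β) =
      -(∏ β ∈ univ.erase m, (u m - u β)) *
        ((u k - y) ^ s / ((u k - u m) * ∏ β ∈ univ.erase k, (u k - u β))) := by
    intro k hk
    have hkm : k ≠ m := (mem_erase.mp hk).1
    rw [Finset.sum_eq_single m]
    · rw [Finset.erase_right_comm]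
      have hprod : (u m - u k) * ∏ β ∈ (univ.erase m).erase k, (u m - u β) =
          ∏ β ∈ univ.erase m, (u m - u β) :=
        Finset.mul_prod_erase _ (fun β => u m - u β) (mem_erase.mpr ⟨hkm, mem_univ k⟩)
      rw [← hprod]
      have h1 : u m - u k ≠ 0 := hsub (Ne.symm hkm)
      have hc : (u k - u m)⁻¹ = -(u m - u k)⁻¹ := by rw [show u k - u m = -(u m - u k) by ring, inv_neg]
      simp only [div_eq_mul_inv, mul_inv]
      linear_combination ((u m - u k) * (u k - y) ^ s *
          (∏ β ∈ (univ.erase m).erase k, (u m - u β)) *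
          (∏ β ∈ univ.erase k, (u k - u β))⁻¹) * hc -
        ((u k - y) ^ s * (∏ β ∈ (univ.erase m).erase k, (u m - u β)) *
          (∏ β ∈ univ.erase k, (u k - u β))⁻¹) * (mul_inv_cancel₀ h1)
    · intro α hα hαm
      refine Finset.prod_eq_zero (mem_erase.mpr ⟨Ne.symm hαm, mem_erase.mpr ⟨Ne.symm hkm, mem_univ m⟩⟩) ?_
      exact sub_self _
    · intro h; exact absurd (mem_erase.mpr ⟨Ne.symm hkm, mem_univ m⟩) h
  rw [Finset.sum_congr rfl hterm, ← Finset.mul_sum] at key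
  -- k = m term
  have hterm2 : (∏ β ∈ univ.erase m, (u m - u β))⁻¹ *
      ∑ α ∈ univ.erase m, ∏ β ∈ (univ.erase m).erase α, (u m - u β) =
      ∑ β ∈ univ.erase m, 1 / (u m - u β) := by
    rw [Finset.mul_sum]
    refine Finset.sum_congr rfl fun α hα => ?_
    have hne : u m - u α ≠ 0 := hsub (Ne.symm (mem_erase.mp hα).1)
    have h := Finset.mul_prod_erase (univ.erase m) (fun β => u m - u β) hα
    rw [inv_mul_eq_div, div_eq_div_iff (hD m) hne, one_mul]
    linear_combination h
  rw [mul_assoc, hterm2] at key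
  -- conclude
  have hDm := hD m
  have hfin : -(s : ℂ) * (u m - y) ^ (s - 1) / (∏ k ∈ univ.erase m, (u m - u k)) +
      (u m - y) ^ s / (∏ k ∈ univ.erase m, (u m - u k)) * ∑ β ∈ univ.erase m, 1 / (u m - u β) =
      (-(s : ℂ) * (u m - y) ^ (s - 1) +
        (u m - y) ^ s * ∑ β ∈ univ.erase m, 1 / (u m - u β)) /
        (∏ k ∈ univ.erase m, (u m - u k)) := by ring
  rw [hfin, eq_div_iff hDm]
  linear_combination key
end

section
/- Fix an integer N ≥ 1, pairwise distinct complex numbers u_1, …, u_N, an index m ∈ {1,…,N}, and a complex number y ∉ {u_1,…,u_N}. Then ∑_{k ≠ m} (u_k − y)^N / ((u_k − u_m) · ∏_{β ≠ k} (u_k − u_β)) = 1 − N·(u_m − y)^{N−1} / ∏_{k ≠ m}(u_m − u_k) + (u_m − y)^N / ∏_{k ≠ m}(u_m − u_k) · ∑_{β ≠ m} 1/(u_m − u_β). -/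
/-! The polynomial `(X - y) ^ N - ∏ k, (X - u k)` has degree `< N`, so it equals its Lagrange
interpolant on the nodes `u k`, where it takes the values `(u k - y) ^ N`. Differentiating this
expansion at the node `u m` and dividing by `∏ k ≠ m, (u m - u k)` gives the identity: the terms
`k ≠ m` give the sum on the left, and the term `k = m` contributes the logarithmic derivative
`∑ β ≠ m, 1 / (u m - u β)` of `∏ β ≠ m, (X - u β)`. -/

open Finset Polynomial Lagrange

namespace Lagrange

theorem degree_sub_nodal_lt {R ι : Type*} [CommRing R] [Nontrivial R] {s : Finset ι} {v : ι → R}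
    {p : R[X]} (hp : p.Monic) (hdeg : p.degree = #s) : (p - nodal s v).degree < #s := by
  simpa only [degree_nodal] using degree_sub_lt_right (hdeg.trans degree_nodal.symm)
    nodal_ne_zero (hp.leadingCoeff.trans nodal_monic.leadingCoeff.symm)

variable {F ι : Type*} [Field F] [DecidableEq ι] {s : Finset ι} {v : ι → F}

theorem eval_derivative_nodal_eq_mul_sum_inv {x : F} (hx : ∀ j ∈ s, x ≠ v j) :
    eval x (derivative (nodal s v)) = eval x (nodal s v) * ∑ j ∈ s, (x - v j)⁻¹ := by
  rw [derivative_nodal, eval_finsetSum, mul_sum]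
  refine sum_congr rfl fun j hj => ?_
  rw [eval_nodal, eval_nodal, ← mul_prod_erase s _ hj, mul_comm (x - v j), mul_assoc,
    mul_inv_cancel₀ (sub_ne_zero.mpr (hx j hj)), mul_one]

theorem sub_mul_eval_derivative_nodal_erase {k m : ι} (hm : m ∈ s) (hk : k ∈ s.erase m) :
    (v m - v k) * eval (v m) (derivative (nodal (s.erase k) v)) =
      eval (v m) (nodal (s.erase m) v) := by
  rw [eval_nodal_derivative_eval_node_eq (mem_erase.mpr ⟨(ne_of_mem_erase hk).symm, hm⟩),
    eval_nodal, eval_nodal, erase_right_comm, mul_prod_erase _ (fun j => v m - v j) hk]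

theorem eq_sum_C_mul_nodal_erase {f : F[X]} (hvs : Set.InjOn v s) (hf : f.degree < #s) :
    f = ∑ i ∈ s, C (f.eval (v i) / eval (v i) (nodal (s.erase i) v)) * nodal (s.erase i) v := by
  conv_lhs => rw [eq_interpolate hvs hf, interpolate_apply]
  refine sum_congr rfl fun i hi => ?_
  rw [basis_eq_prod_sub_inv_mul_nodal_div hi, ← nodal_erase_eq_nodal_div hi,
    nodalWeight_eq_eval_nodal_erase_inv, div_eq_mul_inv, C_mul, mul_assoc]

theorem eval_derivative_div_eq_sum_of_degree_lt {f : F[X]} (hvs : Set.InjOn v s)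
    (hf : f.degree < #s) {m : ι} (hm : m ∈ s) :
    eval (v m) (derivative f) / eval (v m) (nodal (s.erase m) v) =
      ∑ k ∈ s.erase m, f.eval (v k) / ((v m - v k) * eval (v k) (nodal (s.erase k) v)) +
        f.eval (v m) / eval (v m) (nodal (s.erase m) v) * ∑ j ∈ s.erase m, 1 / (v m - v j) := by
  have hnode : ∀ j ∈ s.erase m, v m ≠ v j := fun j hj hmj =>
    ne_of_mem_erase hj (hvs (mem_of_mem_erase hj) hm hmj.symm)
  have hDm : eval (v m) (nodal (s.erase m) v) ≠ 0 :=
    eval_nodal_not_at_node hnode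
  conv_lhs => rw [eq_sum_C_mul_nodal_erase hvs hf]
  simp only [derivative_sum, derivative_C_mul, eval_finsetSum, eval_mul, eval_C]
  rw [sum_div, ← add_sum_erase _ _ hm, add_comm, eval_derivative_nodal_eq_mul_sum_inv hnode]
  congr 1
  · refine sum_congr rfl fun k hk => ?_
    have hmul := sub_mul_eval_derivative_nodal_erase (v := v) hm hk
    have hEk : eval (v m) (derivative (nodal (s.erase k) v)) ≠ 0 :=
      right_ne_zero_of_mul (hmul ▸ hDm)
    rw [← hmul]
    field_simp
  · field_simp

end Lagrange

theorem stmt6_general (N : ℕ) (u : Fin N → ℂ) (hu : Function.Injective u)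
    (m : Fin N) (y : ℂ) :
    ∑ k ∈ univ.erase m,
        (u k - y) ^ N / ((u k - u m) * ∏ β ∈ univ.erase k, (u k - u β)) =
      1 - (N : ℂ) * (u m - y) ^ (N - 1) / (∏ k ∈ univ.erase m, (u m - u k)) +
        (u m - y) ^ N / (∏ k ∈ univ.erase m, (u m - u k)) *
          ∑ β ∈ univ.erase m, 1 / (u m - u β) := by
  set f : ℂ[X] := (X - C y) ^ N - nodal univ u
  have hf : f.degree < #(univ : Finset (Fin N)) :=
    degree_sub_nodal_lt ((monic_X_sub_C y).pow N) (by simp)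
  have heval : ∀ k, f.eval (u k) = (u k - y) ^ N := fun k => by
    simp [f, eval_nodal_at_node (mem_univ k)]
  have hderiv : eval (u m) (derivative f) =
      N * (u m - y) ^ (N - 1) - ∏ k ∈ univ.erase m, (u m - u k) := by
    simp [f, derivative_X_sub_C_pow, eval_nodal_derivative_eval_node_eq (mem_univ m), eval_nodal]
  have hdiff := eval_derivative_div_eq_sum_of_degree_lt hu.injOn hf (mem_univ m)
  simp only [heval, hderiv, eval_nodal] at hdiff
  have hP : ∏ k ∈ univ.erase m, (u m - u k) ≠ 0 :=
    prod_ne_zero_iff.mpr fun k hk => sub_ne_zero.mpr (hu.ne (ne_of_mem_erase hk).symm)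
  rw [sub_div, div_self hP, sum_congr rfl fun k _ => by
    rw [← neg_sub (u k) (u m), neg_mul, div_neg], sum_neg_distrib] at hdiff
  linear_combination hdiff

theorem stmt6 (N : ℕ) (hN : 1 ≤ N) (u : Fin N → ℂ) (hu : Function.Injective u)
    (m : Fin N) (y : ℂ) (hy : ∀ k, y ≠ u k) :
    ∑ k ∈ univ.erase m,
        (u k - y) ^ N / ((u k - u m) * ∏ β ∈ univ.erase k, (u k - u β)) =
      1 - (N : ℂ) * (u m - y) ^ (N - 1) / (∏ k ∈ univ.erase m, (u m - u k)) +
        (u m - y) ^ N / (∏ k ∈ univ.erase m, (u m - u k)) *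
          ∑ β ∈ univ.erase m, 1 / (u m - u β) :=
  stmt6_general N u hu m y
end

section
/- Let a_1, …, a_M be complex numbers, all distinct from a real variable y_0, let f(y_0) = ∏_{j=1}^{M} (y_0 − a_j), and set Σ_k(y_0) = ∑_{j=1}^{M} 1/(a_j − y_0)^k. Then for every integer l ≥ 0, the l-th derivative of √f (i.e. of f^{1/2}, on a domain where f is positive, taking the positive square root) satisfies d^l/dy_0^l ( f(y_0)^{1/2} ) = f(y_0)^{1/2} · L_l(Σ_1(y_0), …, Σ_l(y_0)), where L_l is the polynomial L_l(z_1,…,z_l) = ∑_{p_1+2p_2+…+l p_l = l} (−1)^{∑p_k} l! z_1^{p_1}⋯z_l^{p_l} / (2^{∑p_k} ∏ p_k! ∏ k^{p_k}). -/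
/-!
Let `f = √(∏ j, (t - a j))`. Where the product is positive, `f' = f * g` with `g = -(1/2) Σ₁`
(half the logarithmic derivative of the product), and `g⁽ᵏ⁾ = -(1/2) k! Σₖ₊₁`. Leibniz's rule
applied to `f⁽ⁿ⁺¹⁾ = (f * g)⁽ⁿ⁾` gives `f⁽ⁿ⁾ = f * Yₙ(g, g', g'', …)`, where the complete Bell
polynomials satisfy `Y₀ = 1` and `Yₙ₊₁(x) = Σₖ C(n, k) xₖ Yₙ₋ₖ(x)`. The recurrence holds for the
explicit sum over partitions because `n + 1 = Σᵢ (i + 1) pᵢ` splits every term according to the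
part that is removed. Finally `L_l(Σ₁, …, Σ_l)` is `Y_l` evaluated at `xₖ = -(1/2) k! Σₖ₊₁`.
-/

open Finset

/-- The rescaled complete exponential Bell polynomial `L_l(z_1, …, z_l)` (real version). -/
noncomputable def LPoly (l : ℕ) (z : ℕ → ℝ) : ℝ :=
  ∑ p ∈ (Fintype.piFinset fun _ : Fin l => Finset.range (l + 1)) |>.filter
      (fun p => ∑ i : Fin l, ((i : ℕ) + 1) * p i = l),
    (-1 : ℝ) ^ (∑ i : Fin l, p i) * (Nat.factorial l : ℝ) *
      (∏ i : Fin l, z ((i : ℕ) + 1) ^ p i) /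
      ((2 : ℝ) ^ (∑ i : Fin l, p i) *
        (∏ i : Fin l, ((Nat.factorial (p i) : ℝ))) *
        ∏ i : Fin l, (((i : ℕ) : ℝ) + 1) ^ p i)

open scoped Nat ContDiff Topology

@[to_additive]
theorem prod_apply_update {ι M N : Type*} [Fintype ι] [DecidableEq ι] [CommMonoid N]
    (F : ι → M → N) (q : ι → M) (i : ι) (v : M) :
    ∏ j, F j (Function.update q i v j) = F i v * ∏ j ∈ univ.erase i, F j (q j) := by
  rw [← mul_prod_erase univ _ (mem_univ i), Function.update_self]
  congr 1
  exact prod_congr rfl fun j hj => by rw [Function.update_of_ne (ne_of_mem_erase hj)]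

namespace CompleteBell

variable {N : ℕ}

/-- A vector `p : Fin N → ℕ` stands for the partition of `weight p` with `p i` parts of size
`i + 1`. -/
def weight (p : Fin N → ℕ) : ℕ := ∑ i : Fin N, ((i : ℕ) + 1) * p i

def multiplicityVectors (N l : ℕ) : Finset (Fin N → ℕ) :=
  (Fintype.piFinset fun _ => range (l + 1)).filter fun p => weight p = l

noncomputable def term (x : ℕ → ℝ) (p : Fin N → ℕ) : ℝ :=
  ∏ i : Fin N, (x i / ((i : ℕ) + 1)!) ^ p i / (p i)!

theorem apply_le_weight (p : Fin N → ℕ) (i : Fin N) : ((i : ℕ) + 1) * p i ≤ weight p :=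
  single_le_sum (f := fun i : Fin N => ((i : ℕ) + 1) * p i) (fun _ _ => Nat.zero_le _)
    (mem_univ i)

theorem mem_multiplicityVectors {l : ℕ} {p : Fin N → ℕ} :
    p ∈ multiplicityVectors N l ↔ weight p = l := by
  refine ⟨fun h => (mem_filter.mp h).2, fun h => mem_filter.mpr ⟨?_, h⟩⟩
  refine Fintype.mem_piFinset.mpr fun i => mem_range.mpr (Nat.lt_succ_of_le ?_)
  exact h ▸ (Nat.le_mul_of_pos_left _ (Nat.succ_pos _)).trans (apply_le_weight p i)

theorem multiplicityVectors_zero : multiplicityVectors N 0 = {0} := by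
  ext p
  simp only [mem_multiplicityVectors, weight, mem_singleton, sum_eq_zero_iff, mem_univ,
    true_implies, mul_eq_zero, Nat.add_one_ne_zero, false_or, funext_iff, Pi.zero_apply]

theorem weight_update_succ (p : Fin N → ℕ) (i : Fin N) :
    weight (Function.update p i (p i + 1)) = weight p + ((i : ℕ) + 1) := by
  have h := sum_apply_update (fun (j : Fin N) v => ((j : ℕ) + 1) * v) p i (p i)
  rw [Function.update_eq_self] at h
  rw [weight, weight, sum_apply_update, h]
  ring

theorem term_update_succ (x : ℕ → ℝ) (p : Fin N → ℕ) (i : Fin N) :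
    (p i + 1) * term x (Function.update p i (p i + 1)) = x i / ((i : ℕ) + 1)! * term x p := by
  let F (j : Fin N) (v : ℕ) : ℝ := (x j / ((j : ℕ) + 1)!) ^ v / (v)!
  have h := prod_apply_update F p i (p i)
  rw [Function.update_eq_self] at h
  rw [term, term, prod_apply_update F, h]
  simp only [F, Nat.factorial_succ (p i), pow_succ]
  push_cast
  field_simp

theorem sum_apply_mul_term (x : ℕ → ℝ) {l : ℕ} {i : Fin N} (hi : (i : ℕ) + 1 ≤ l) :
    ∑ p ∈ multiplicityVectors N l, p i * term x p
      = x i / ((i : ℕ) + 1)! * ∑ q ∈ multiplicityVectors N (l - ((i : ℕ) + 1)), term x q := by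
  rw [← sum_filter_of_ne (p := fun p => p i ≠ 0) fun p _ hp h0 => hp (by simp [h0]), mul_sum]
  refine sum_nbij' (fun p => Function.update p i (p i - 1))
    (fun q => Function.update q i (q i + 1)) ?_ ?_ ?_ ?_ ?_
  · intro p hp
    obtain ⟨hp, hpi⟩ := mem_filter.mp hp
    have h := weight_update_succ (Function.update p i (p i - 1)) i
    simp only [Function.update_self, Nat.sub_add_cancel (Nat.pos_of_ne_zero hpi),
      Function.update_idem, Function.update_eq_self, mem_multiplicityVectors.mp hp] at h
    exact mem_multiplicityVectors.mpr (by omega)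
  · intro q hq
    refine mem_filter.mpr ⟨mem_multiplicityVectors.mpr ?_, by simp⟩
    rw [weight_update_succ, mem_multiplicityVectors.mp hq]
    omega
  · intro p hp
    simp [Nat.sub_add_cancel (Nat.pos_of_ne_zero (mem_filter.mp hp).2)]
  · intro q _
    simp
  · intro p hp
    have hpi := (mem_filter.mp hp).2
    rw [← term_update_succ]
    simp only [Function.update_self, Nat.sub_add_cancel (Nat.pos_of_ne_zero hpi),
      Function.update_idem, Function.update_eq_self]
    push_cast [Nat.one_le_iff_ne_zero.mpr hpi]
    ring

theorem cast_mul_sum_term (x : ℕ → ℝ) (l : ℕ) :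
    (l : ℝ) * ∑ p ∈ multiplicityVectors N l, term x p
      = ∑ i : Fin N, ((i : ℕ) + 1 : ℝ) * ∑ p ∈ multiplicityVectors N l, p i * term x p := by
  simp only [mul_sum, sum_comm (s := univ)]
  refine sum_congr rfl fun p hp => ?_
  have h : ((weight p : ℕ) : ℝ) = l := congrArg _ (mem_multiplicityVectors.mp hp)
  simp only [weight] at h
  push_cast at h
  rw [← h, sum_mul]
  exact sum_congr rfl fun i _ => by ring

end CompleteBell

open CompleteBell

/-- For `l ≤ N` this is the complete exponential Bell polynomial `Y_l(x 0, …, x (l - 1))`: the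
vectors of length `N` then see every partition of `l`. -/
noncomputable def completeBell (N l : ℕ) (x : ℕ → ℝ) : ℝ :=
  l ! * ∑ p ∈ multiplicityVectors N l, term x p

theorem completeBell_zero (N : ℕ) (x : ℕ → ℝ) : completeBell N 0 x = 1 := by
  simp [completeBell, multiplicityVectors_zero, term]

theorem completeBell_succ {N n : ℕ} (hn : n < N) (x : ℕ → ℝ) :
    completeBell N (n + 1) x
      = ∑ k ∈ range (n + 1), n.choose k * x k * completeBell N (n - k) x := by
  have hpart : ∀ i : Fin N,
      ((i : ℕ) + 1 : ℝ) * ∑ p ∈ multiplicityVectors N (n + 1), p i * term x p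
        = if (i : ℕ) ≤ n then x i / (i : ℕ)! * ∑ q ∈ multiplicityVectors N (n - i), term x q
          else 0 := by
    intro i
    split_ifs with hi
    · rw [sum_apply_mul_term x (by omega : (i : ℕ) + 1 ≤ n + 1), Nat.factorial_succ,
        Nat.add_sub_add_right]
      push_cast
      field_simp
    · refine mul_eq_zero_of_right _ (sum_eq_zero fun p hp => ?_)
      have := apply_le_weight p i
      rw [mem_multiplicityVectors.mp hp] at this
      have : p i = 0 := by nlinarith
      simp [this]
  have hrange : (range N).filter (· ≤ n) = range (n + 1) := by
    ext k; simp only [mem_filter, mem_range]; omega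
  have hweight := cast_mul_sum_term (N := N) x (n + 1)
  simp only [hpart] at hweight
  rw [Fin.sum_univ_eq_sum_range (fun k => if k ≤ n then
      x k / k ! * ∑ q ∈ multiplicityVectors N (n - k), term x q else 0),
    ← sum_filter, hrange] at hweight
  calc completeBell N (n + 1) x
      = n ! * (((n + 1 : ℕ) : ℝ) * ∑ p ∈ multiplicityVectors N (n + 1), term x p) := by
        rw [completeBell, Nat.factorial_succ]; push_cast; ring
    _ = _ := by
      rw [hweight, mul_sum]
      refine sum_congr rfl fun k hk => ?_
      rw [completeBell, Nat.cast_choose ℝ (Nat.lt_succ_iff.mp (mem_range.mp hk))]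
      field_simp

theorem LPoly_eq_completeBell (l : ℕ) (z : ℕ → ℝ) :
    LPoly l z = completeBell l l (fun k => -(1 / 2) * (k ! * z (k + 1))) := by
  rw [LPoly, completeBell, mul_sum]
  refine sum_congr rfl fun p _ => ?_
  have hfactor : ∀ i : Fin l,
      (-(1 / 2) * ((i : ℕ)! * z ((i : ℕ) + 1)) / ((i : ℕ) + 1)!) ^ p i / (p i)!
        = (-1) ^ p i * z ((i : ℕ) + 1) ^ p i / (2 ^ p i * (p i)! * (((i : ℕ) : ℝ) + 1) ^ p i) := by
    intro i
    rw [Nat.factorial_succ]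
    push_cast
    field_simp
    rw [neg_pow, div_pow, mul_pow]
    field_simp
  rw [term, prod_congr rfl fun i _ => hfactor i, prod_div_distrib, prod_mul_distrib,
    prod_mul_distrib, prod_mul_distrib, prod_pow_eq_pow_sum, prod_pow_eq_pow_sum]
  ring

theorem iteratedDeriv_eq_mul_completeBell {f g : ℝ → ℝ} {x : ℝ} (hf : ContDiffAt ℝ ∞ f x)
    (hg : ContDiffAt ℝ ∞ g x) (hderiv : deriv f =ᶠ[𝓝 x] f * g) {N n : ℕ} (hn : n ≤ N) :
    iteratedDeriv n f x = f x * completeBell N n (fun k => iteratedDeriv k g x) := by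
  induction n using Nat.strong_induction_on with
  | _ n ih =>
    rcases n with _ | m
    · rw [iteratedDeriv_zero, completeBell_zero, mul_one]
    rw [iteratedDeriv_succ', hderiv.iteratedDeriv_eq,
      iteratedDeriv_mul (hf.of_le (by exact_mod_cast le_top)) (hg.of_le (by exact_mod_cast le_top)),
      completeBell_succ hn, mul_sum, ← sum_range_reflect]
    refine sum_congr rfl fun k hk => ?_
    have hk : k ≤ m := Nat.lt_succ_iff.mp (mem_range.mp hk)
    rw [Nat.add_sub_cancel, ih (m - k) (by omega) (by omega), Nat.choose_symm hk,
      Nat.sub_sub_self hk]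
    ring

section InvConstSub

variable {𝕜 : Type*} [NontriviallyNormedField 𝕜]

theorem iteratedDeriv_inv_const_sub (k : ℕ) (a y : 𝕜) :
    iteratedDeriv k (fun u => (a - u)⁻¹) y = k ! * ((a - y) ^ (k + 1))⁻¹ := by
  have := congrFun (iter_deriv_inv_linear k (-1 : 𝕜) a) y
  simp only [neg_one_mul, neg_add_eq_sub] at this
  rw [iteratedDeriv_eq_iterate, this, mul_right_comm _ _ ((-1 : 𝕜) ^ k), ← mul_pow,
    show (-1 - k : ℤ) = -((k + 1 : ℕ) : ℤ) by push_cast; ring, zpow_neg, zpow_natCast]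
  norm_num

theorem iteratedDeriv_sum_inv_const_sub {ι : Type*} [Fintype ι] (a : ι → 𝕜) {y : 𝕜}
    (ha : ∀ j, a j - y ≠ 0) (k : ℕ) :
    iteratedDeriv k (fun u => ∑ j, (a j - u)⁻¹) y = k ! * ∑ j, 1 / (a j - y) ^ (k + 1) := by
  rw [iteratedDeriv_fun_sum fun j _ => by fun_prop (disch := exact ha j), mul_sum]
  simp only [iteratedDeriv_inv_const_sub, one_div]

end InvConstSub

theorem deriv_sqrt_prod_sub {ι : Type*} [Fintype ι] (a : ι → ℝ) {t : ℝ}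
    (ht : 0 < ∏ j, (t - a j)) :
    deriv (fun u => √(∏ j, (u - a j))) t
      = √(∏ j, (t - a j)) * (-(1 / 2) * ∑ j, (a j - t)⁻¹) := by
  have hne : ∀ j ∈ univ, t - a j ≠ 0 := fun j hj => prod_ne_zero_iff.mp ht.ne' j hj
  have hlog := logDeriv_prod (f := fun j u => u - a j) hne (fun j _ => by fun_prop)
  simp only [logDeriv_apply, deriv_sub_const, deriv_id''] at hlog
  rw [div_eq_iff ht.ne'] at hlog
  have hsum : ∑ j, (a j - t)⁻¹ = -∑ j, 1 / (t - a j) := by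
    rw [← sum_neg_distrib]
    exact sum_congr rfl fun j _ => by rw [one_div, ← inv_neg, neg_sub]
  have hsqrt : 0 < √(∏ j, (t - a j)) := Real.sqrt_pos.mpr ht
  rw [deriv_sqrt (by fun_prop) ht.ne', hlog, hsum]
  field_simp
  rw [Real.sq_sqrt ht.le]

theorem stmt11_general (M : ℕ) (a : Fin M → ℝ) (s : Set ℝ) (hs : IsOpen s)
    (hpos : ∀ t ∈ s, 0 < ∏ j : Fin M, (t - a j))
    (y₀ : ℝ) (hy₀ : y₀ ∈ s) (l : ℕ) :
    iteratedDeriv l (fun t => Real.sqrt (∏ j : Fin M, (t - a j))) y₀ =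
      Real.sqrt (∏ j : Fin M, (y₀ - a j)) *
        LPoly l (fun k => ∑ j : Fin M, 1 / (a j - y₀) ^ k) := by
  have ha : ∀ j, a j - y₀ ≠ 0 := fun j h =>
    prod_ne_zero_iff.mp (hpos y₀ hy₀).ne' j (mem_univ j) (by linarith)
  have hderiv : deriv (fun t => √(∏ j, (t - a j))) =ᶠ[𝓝 y₀]
      (fun t => √(∏ j, (t - a j))) * fun u => -(1 / 2) * ∑ j, (a j - u)⁻¹ := by
    filter_upwards [hs.mem_nhds hy₀] with t ht using deriv_sqrt_prod_sub a (hpos t ht)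
  rw [LPoly_eq_completeBell, iteratedDeriv_eq_mul_completeBell
    ((by fun_prop : ContDiffAt ℝ ∞ (fun t => ∏ j, (t - a j)) y₀).sqrt (hpos y₀ hy₀).ne')
    (by fun_prop (disch := exact ha _)) hderiv le_rfl]
  simp only [iteratedDeriv_const_mul_field, iteratedDeriv_sum_inv_const_sub a ha]

theorem stmt11 (M : ℕ) (a : Fin M → ℝ) (s : Set ℝ) (hs : IsOpen s)
    (hpos : ∀ t ∈ s, 0 < ∏ j : Fin M, (t - a j))
    (y₀ : ℝ) (hy₀ : y₀ ∈ s) (ha : ∀ j, a j ≠ y₀) (l : ℕ) :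
    iteratedDeriv l (fun t => Real.sqrt (∏ j : Fin M, (t - a j))) y₀ =
      Real.sqrt (∏ j : Fin M, (y₀ - a j)) *
        LPoly l (fun k => ∑ j : Fin M, 1 / (a j - y₀) ^ k) :=
  stmt11_general M a s hs hpos y₀ hy₀ l
end

section
/- With the same setup, writing φ(y_0) = f(y_0)^{−1/2}, for every integer l ≥ 0 and every integer n one has d^l/dy_0^l ( φ(y_0)^n ) = φ(y_0)^n · L_l(−n·Σ_1(y_0), …, −n·Σ_l(y_0)). -/
open Finset

namespace Stmt12Aux

/-- partitions of `l` with parts indexed by `Fin m` (part size `i+1`). -/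
def Acal (m l : ℕ) : Finset (Fin m → ℕ) :=
  (Fintype.piFinset fun _ : Fin m => Finset.range (l + 1)).filter
    (fun p => ∑ i : Fin m, ((i : ℕ) + 1) * p i = l)

noncomputable def co (c m : ℕ) (p : Fin m → ℕ) : ℝ :=
  (-1 : ℝ) ^ (∑ i : Fin m, p i) * (Nat.factorial c : ℝ) /
    ((2 : ℝ) ^ (∑ i : Fin m, p i) * (∏ i : Fin m, ((Nat.factorial (p i) : ℝ))) *
      ∏ i : Fin m, (((i : ℕ) : ℝ) + 1) ^ p i)

noncomputable def Pz (z : ℕ → ℝ) (m : ℕ) (p : Fin m → ℕ) : ℝ :=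
  ∏ i : Fin m, z ((i : ℕ) + 1) ^ p i

lemma LPoly_eq (l : ℕ) (z : ℕ → ℝ) :
    LPoly l z = ∑ p ∈ Acal l l, co l l p * Pz z l p := by
  rw [LPoly, Acal]
  refine Finset.sum_congr rfl fun p _ => ?_
  rw [co, Pz]; ring

lemma mem_Acal_of_sum {m l : ℕ} {p : Fin m → ℕ}
    (h : ∑ i : Fin m, ((i : ℕ) + 1) * p i = l) : p ∈ Acal m l := by
  rw [Acal, Finset.mem_filter]
  refine ⟨Fintype.mem_piFinset.2 fun i => ?_, h⟩
  rw [Finset.mem_range]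
  have h1 : ((i : ℕ) + 1) * p i ≤ l := h ▸ Finset.single_le_sum
    (f := fun i : Fin m => ((i : ℕ) + 1) * p i) (fun _ _ => Nat.zero_le _) (Finset.mem_univ i)
  have h2 : p i ≤ ((i : ℕ) + 1) * p i := Nat.le_mul_of_pos_left _ (Nat.succ_pos _)
  omega

lemma sum_Acal {m l : ℕ} {p : Fin m → ℕ} (h : p ∈ Acal m l) :
    ∑ i : Fin m, ((i : ℕ) + 1) * p i = l := (Finset.mem_filter.1 h).2

section UpdateHelpers
variable {m : ℕ}

lemma prod_update_eq {β : Type*} [CommMonoid β] (h : Fin m → ℕ → β) (P : Fin m → ℕ)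
    (a : Fin m) (v : ℕ) :
    ∏ i : Fin m, h i (Function.update P a v i) = h a v * ∏ i ∈ univ.erase a, h i (P i) := by
  rw [← Finset.mul_prod_erase univ (fun i => h i (Function.update P a v i)) (mem_univ a)]
  congr 1
  · rw [Function.update_self]
  · exact Finset.prod_congr rfl fun i hi =>
      congrArg (h i) (Function.update_of_ne (Finset.ne_of_mem_erase hi) _ _)

lemma sum_update_eq {β : Type*} [AddCommMonoid β] (h : Fin m → ℕ → β) (P : Fin m → ℕ)
    (a : Fin m) (v : ℕ) :
    ∑ i : Fin m, h i (Function.update P a v i) = h a v + ∑ i ∈ univ.erase a, h i (P i) := by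
  rw [← Finset.add_sum_erase univ (fun i => h i (Function.update P a v i)) (mem_univ a)]
  congr 1
  · rw [Function.update_self]
  · exact Finset.sum_congr rfl fun i hi =>
      congrArg (h i) (Function.update_of_ne (Finset.ne_of_mem_erase hi) _ _)

lemma prod_inc_of_step {β : Type*} [CommMonoid β] (h : Fin m → ℕ → β) (P : Fin m → ℕ)
    (a : Fin m) (c : β) (hstep : h a (P a + 1) = c * h a (P a)) :
    ∏ i : Fin m, h i (Function.update P a (P a + 1) i) = c * ∏ i : Fin m, h i (P i) := by
  rw [prod_update_eq, hstep, ← Finset.mul_prod_erase univ (fun i => h i (P i)) (mem_univ a),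
    mul_assoc]

lemma sum_inc_of_step {β : Type*} [AddCommMonoid β] (h : Fin m → ℕ → β) (P : Fin m → ℕ)
    (a : Fin m) (c : β) (hstep : h a (P a + 1) = c + h a (P a)) :
    ∑ i : Fin m, h i (Function.update P a (P a + 1) i) = c + ∑ i : Fin m, h i (P i) := by
  rw [sum_update_eq, hstep, ← Finset.add_sum_erase univ (fun i => h i (P i)) (mem_univ a),
    add_assoc]

end UpdateHelpers

section Pieces
variable {m : ℕ}

def S (P : Fin m → ℕ) : ℕ := ∑ i : Fin m, P i
noncomputable def Nf (P : Fin m → ℕ) : ℝ := ∏ i : Fin m, (Nat.factorial (P i) : ℝ)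
noncomputable def Dw (P : Fin m → ℕ) : ℝ := ∏ i : Fin m, (((i : ℕ) : ℝ) + 1) ^ P i

lemma co_def (c : ℕ) (P : Fin m → ℕ) :
    co c m P = (-1 : ℝ) ^ S P * (Nat.factorial c : ℝ) / ((2 : ℝ) ^ S P * Nf P * Dw P) := rfl

lemma Nf_pos (P : Fin m → ℕ) : 0 < Nf P :=
  Finset.prod_pos fun i _ => by exact_mod_cast Nat.factorial_pos (P i)

lemma Dw_pos (P : Fin m → ℕ) : 0 < Dw P :=
  Finset.prod_pos fun i _ => pow_pos (by positivity) _

/-- increment a partition multiplicity -/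
def inc (a : Fin m) (P : Fin m → ℕ) : Fin m → ℕ := Function.update P a (P a + 1)

def dec (a : Fin m) (P : Fin m → ℕ) : Fin m → ℕ := Function.update P a (P a - 1)

lemma inc_apply (a : Fin m) (P : Fin m → ℕ) (i : Fin m) :
    inc a P i = if i = a then P a + 1 else P i := Function.update_apply ..

lemma dec_apply (a : Fin m) (P : Fin m → ℕ) (i : Fin m) :
    dec a P i = if i = a then P a - 1 else P i := Function.update_apply ..

lemma inc_dec (a : Fin m) (P : Fin m → ℕ) (h : 1 ≤ P a) : inc a (dec a P) = P := by
  funext i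
  rcases eq_or_ne i a with rfl | hne
  · simp [inc_apply, dec_apply]; omega
  · simp [inc_apply, dec_apply, hne]

lemma dec_inc (a : Fin m) (P : Fin m → ℕ) : dec a (inc a P) = P := by
  funext i
  rcases eq_or_ne i a with rfl | hne
  · simp [inc_apply, dec_apply]
  · simp [inc_apply, dec_apply, hne]

lemma S_inc (a : Fin m) (P : Fin m → ℕ) : S (inc a P) = 1 + S P :=
  sum_inc_of_step (fun _ v => v) P a 1 (by beta_reduce; omega)

lemma wS_inc (a : Fin m) (P : Fin m → ℕ) :
    ∑ i : Fin m, ((i : ℕ) + 1) * inc a P i = ((a : ℕ) + 1) + ∑ i : Fin m, ((i : ℕ) + 1) * P i :=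
  sum_inc_of_step (fun i v => ((i : ℕ) + 1) * v) P a ((a : ℕ) + 1) (by ring)

lemma Nf_inc (a : Fin m) (P : Fin m → ℕ) : Nf (inc a P) = ((P a : ℝ) + 1) * Nf P :=
  prod_inc_of_step (fun _ v => (Nat.factorial v : ℝ)) P a ((P a : ℝ) + 1)
    (by beta_reduce; rw [Nat.factorial_succ]; push_cast; ring)

lemma Dw_inc (a : Fin m) (P : Fin m → ℕ) : Dw (inc a P) = (((a : ℕ) : ℝ) + 1) * Dw P :=
  prod_inc_of_step (fun i v => (((i : ℕ) : ℝ) + 1) ^ v) P a (((a : ℕ) : ℝ) + 1)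
    (by beta_reduce; rw [pow_succ]; ring)

lemma Pz_inc (z : ℕ → ℝ) (a : Fin m) (P : Fin m → ℕ) :
    Pz z m (inc a P) = z ((a : ℕ) + 1) * Pz z m P :=
  prod_inc_of_step (fun i v => z ((i : ℕ) + 1) ^ v) P a (z ((a : ℕ) + 1))
    (by beta_reduce; rw [pow_succ]; ring)

lemma co_inc (c : ℕ) (a : Fin m) (P : Fin m → ℕ) :
    co c m (inc a P) =
      (-1) / (2 * ((P a : ℝ) + 1) * (((a : ℕ) : ℝ) + 1)) * co c m P := by
  rw [co_def, co_def, S_inc, Nf_inc, Dw_inc]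
  have h1 : Nf P ≠ 0 := (Nf_pos P).ne'
  have h2 : Dw P ≠ 0 := (Dw_pos P).ne'
  have h3 : ((P a : ℝ) + 1) ≠ 0 := by positivity
  have h4 : (((a : ℕ) : ℝ) + 1) ≠ 0 := by positivity
  rw [pow_add, pow_add]
  field_simp

end Pieces

section Padding
variable {l : ℕ}

def ext (p : Fin l → ℕ) : Fin (l + 1) → ℕ :=
  fun j => if h : (j : ℕ) < l then p ⟨j, h⟩ else 0

lemma ext_castSucc (p : Fin l → ℕ) (i : Fin l) : ext p i.castSucc = p i := by
  simp [ext]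

lemma ext_last (p : Fin l → ℕ) : ext p (Fin.last l) = 0 := by
  simp [ext]

lemma sum_ext {β : Type*} [AddCommMonoid β] (G : ℕ → ℕ → β) (hG : G l 0 = 0) (p : Fin l → ℕ) :
    ∑ j : Fin (l + 1), G (j : ℕ) (ext p j) = ∑ i : Fin l, G (i : ℕ) (p i) := by
  rw [Fin.sum_univ_castSucc]
  simp [ext_castSucc, ext_last, hG]

lemma prod_ext {β : Type*} [CommMonoid β] (G : ℕ → ℕ → β) (hG : G l 0 = 1) (p : Fin l → ℕ) :
    ∏ j : Fin (l + 1), G (j : ℕ) (ext p j) = ∏ i : Fin l, G (i : ℕ) (p i) := by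
  rw [Fin.prod_univ_castSucc]
  simp [ext_castSucc, ext_last, hG]

lemma S_ext (p : Fin l → ℕ) : S (ext p) = S p := sum_ext (fun _ v => v) rfl p

lemma wS_ext (p : Fin l → ℕ) :
    ∑ j : Fin (l + 1), ((j : ℕ) + 1) * ext p j = ∑ i : Fin l, ((i : ℕ) + 1) * p i :=
  sum_ext (fun x v => (x + 1) * v) (by simp) p

lemma Nf_ext (p : Fin l → ℕ) : Nf (ext p) = Nf p :=
  prod_ext (fun _ v => (Nat.factorial v : ℝ)) (by simp) p

lemma Dw_ext (p : Fin l → ℕ) : Dw (ext p) = Dw p :=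
  prod_ext (fun x v => ((x : ℝ) + 1) ^ v) (by simp) p

lemma Pz_ext (z : ℕ → ℝ) (p : Fin l → ℕ) : Pz z (l + 1) (ext p) = Pz z l p :=
  prod_ext (fun x v => z (x + 1) ^ v) (by simp) p

lemma co_ext (c : ℕ) (p : Fin l → ℕ) : co c (l + 1) (ext p) = co c l p := by
  rw [co_def, co_def, S_ext, Nf_ext, Dw_ext]

lemma Acal_last_eq_zero {P : Fin (l + 1) → ℕ} (h : P ∈ Acal (l + 1) l) :
    P (Fin.last l) = 0 := by
  have hs := sum_Acal h
  have h1 := Finset.single_le_sum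
    (f := fun j : Fin (l + 1) => ((j : ℕ) + 1) * P j) (fun _ _ => Nat.zero_le _)
    (Finset.mem_univ (Fin.last l))
  simp only [Fin.val_last] at h1
  rw [hs] at h1
  rcases Nat.eq_zero_or_pos (P (Fin.last l)) with h0 | h0
  · exact h0
  · exact absurd h1 (Nat.not_le.2 (Nat.lt_of_lt_of_le (Nat.lt_succ_self l)
      (Nat.le_mul_of_pos_right _ h0)))

lemma ext_res {P : Fin (l + 1) → ℕ} (hlast : P (Fin.last l) = 0) :
    ext (fun i => P i.castSucc) = P := by
  funext j
  refine Fin.lastCases ?_ (fun i => ?_) j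
  · rw [ext_last, hlast]
  · rw [ext_castSucc]

lemma sum_Acal_ext (G : (Fin (l + 1) → ℕ) → ℝ) :
    ∑ P ∈ Acal (l + 1) l, G P = ∑ p ∈ Acal l l, G (ext p) := by
  refine Finset.sum_bij' (fun P _ => fun i : Fin l => P i.castSucc) (fun p _ => ext p)
    ?_ ?_ ?_ ?_ ?_
  · intro P hP
    refine mem_Acal_of_sum ?_
    have hs := sum_Acal hP
    rw [Fin.sum_univ_castSucc, Acal_last_eq_zero hP, Nat.mul_zero, Nat.add_zero] at hs
    simpa using hs
  · intro p hp
    exact mem_Acal_of_sum ((wS_ext p).trans (sum_Acal hp))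
  · intro P hP
    exact ext_res (Acal_last_eq_zero hP)
  · intro p _
    funext i
    show ext p i.castSucc = p i
    rw [ext_castSucc]
  · intro P hP
    rw [ext_res (Acal_last_eq_zero hP)]

lemma prod_erase_castSucc {β : Type*} [CommMonoid β] (f : Fin (l + 1) → β)
    (hlast : f (Fin.last l) = 1) (i : Fin l) :
    ∏ j ∈ univ.erase i.castSucc, f j = ∏ i' ∈ univ.erase i, f i'.castSucc := by
  rw [← Finset.prod_erase ((univ : Finset (Fin (l+1))).erase i.castSucc) hlast]
  have hset : ((univ : Finset (Fin (l + 1))).erase i.castSucc).erase (Fin.last l)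
      = (univ.erase i).map ⟨Fin.castSucc, Fin.castSucc_injective l⟩ := by
    ext j
    simp only [Finset.mem_erase, Finset.mem_univ, and_true, Finset.mem_map,
      Function.Embedding.coeFn_mk]
    constructor
    · rintro ⟨hj1, hj2⟩
      obtain ⟨y, rfl⟩ := Fin.exists_castSucc_eq.mpr hj1
      exact ⟨y, fun hy => hj2 (by rw [hy]), rfl⟩
    · rintro ⟨y, hy, rfl⟩
      exact ⟨(Fin.castSucc_lt_last y).ne, fun h => hy (Fin.castSucc_injective l h)⟩
  rw [hset, Finset.prod_map]
  rfl

end Padding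

noncomputable def Dterm (z : ℕ → ℝ) (m : ℕ) (P : Fin m → ℕ) (j : Fin m) : ℝ :=
  (((j : ℕ) : ℝ) + 1) * (P j : ℝ) * z ((j : ℕ) + 2) * z ((j : ℕ) + 1) ^ (P j - 1) *
    ∏ j' ∈ univ.erase j, z ((j' : ℕ) + 1) ^ P j'

lemma Dsum_ext {l : ℕ} (z : ℕ → ℝ) (p : Fin l → ℕ) :
    ∑ j : Fin (l + 1), Dterm z (l + 1) (ext p) j = ∑ i : Fin l, Dterm z l p i := by
  rw [Fin.sum_univ_castSucc]
  have hlast : Dterm z (l + 1) (ext p) (Fin.last l) = 0 := by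
    rw [Dterm, ext_last]; simp
  rw [hlast, add_zero]
  refine Finset.sum_congr rfl fun i _ => ?_
  rw [Dterm, Dterm, ext_castSucc,
    prod_erase_castSucc (fun j => z ((j : ℕ) + 1) ^ ext p j)
      (by show z ((Fin.last l : ℕ) + 1) ^ ext p (Fin.last l) = 1
          rw [ext_last]; simp) i]
  simp [ext_castSucc]

lemma co_succ (c m : ℕ) (P : Fin m → ℕ) : co (c + 1) m P = ((c : ℝ) + 1) * co c m P := by
  rw [co_def, co_def, Nat.factorial_succ]
  push_cast
  ring

lemma T0_eq (l : ℕ) (z : ℕ → ℝ) :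
    ∑ P' ∈ Acal (l + 1) (l + 1),
        ((((0 : Fin (l + 1)) : ℕ) : ℝ) + 1) * (P' 0 : ℝ) / ((l : ℝ) + 1) *
          (co (l + 1) (l + 1) P' * Pz z (l + 1) P')
      = (- z 1 / 2) * ∑ P ∈ Acal (l + 1) l, co l (l + 1) P * Pz z (l + 1) P := by
  rw [Finset.mul_sum]
  rw [← Finset.sum_filter_of_ne (p := fun P' : Fin (l + 1) → ℕ => P' 0 ≠ 0)
    (fun P' _ hP' h0 => hP' (by rw [h0]; push_cast; ring))]
  refine (Finset.sum_bij' (fun P _ => inc 0 P) (fun P' _ => dec 0 P') ?_ ?_ ?_ ?_ ?_).symm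
  · intro P hP
    rw [Finset.mem_filter]
    constructor
    · refine mem_Acal_of_sum ?_
      rw [wS_inc, sum_Acal hP]
      simp only [Fin.val_zero]
      omega
    · show inc 0 P 0 ≠ 0
      rw [inc_apply, if_pos rfl]
      omega
  · intro P' hP'
    rw [Finset.mem_filter] at hP'
    obtain ⟨hP'm, hP'0⟩ := hP'
    show dec 0 P' ∈ Acal (l + 1) l
    refine mem_Acal_of_sum ?_
    have h1 : inc 0 (dec 0 P') = P' := inc_dec 0 P' (by omega)
    have h2 := wS_inc 0 (dec 0 P')
    rw [h1, sum_Acal hP'm] at h2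
    simp at h2
    omega
  · intro P _
    show dec 0 (inc 0 P) = P
    exact dec_inc 0 P
  · intro P' hP'
    rw [Finset.mem_filter] at hP'
    show inc 0 (dec 0 P') = P'
    exact inc_dec 0 P' (by omega)
  · intro P _
    beta_reduce
    rw [co_inc, Pz_inc, inc_apply, if_pos rfl, co_succ l (l + 1) P]
    have hl : ((l : ℝ) + 1) ≠ 0 := by positivity
    have hp : ((P 0 : ℝ) + 1) ≠ 0 := by positivity
    simp only [Fin.val_zero]
    push_cast
    field_simp

lemma Rlast (l : ℕ) (z : ℕ → ℝ) :
    ∑ P ∈ Acal (l + 1) l, co l (l + 1) P * Dterm z (l + 1) P (Fin.last l) = 0 := by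
  refine Finset.sum_eq_zero fun P hP => ?_
  rw [Dterm, Acal_last_eq_zero hP]
  push_cast
  ring

lemma Tsucc_eq (l : ℕ) (z : ℕ → ℝ) (i : Fin l) :
    ∑ P' ∈ Acal (l + 1) (l + 1),
        (((i.succ : ℕ) : ℝ) + 1) * (P' i.succ : ℝ) / ((l : ℝ) + 1) *
          (co (l + 1) (l + 1) P' * Pz z (l + 1) P')
      = ∑ P ∈ Acal (l + 1) l, co l (l + 1) P * Dterm z (l + 1) P i.castSucc := by
  have hne : i.castSucc ≠ i.succ := i.castSucc_lt_succ.ne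
  rw [← Finset.sum_filter_of_ne (p := fun P' : Fin (l + 1) → ℕ => P' i.succ ≠ 0)
    (fun P' _ hP' h0 => hP' (by rw [h0]; push_cast; ring))]
  rw [← Finset.sum_filter_of_ne (s := Acal (l + 1) l)
    (p := fun P : Fin (l + 1) → ℕ => P i.castSucc ≠ 0)
    (fun P _ hP h0 => hP (by rw [Dterm, h0]; push_cast; ring))]
  refine (Finset.sum_bij' (fun P _ => inc i.succ (dec i.castSucc P))
    (fun P' _ => inc i.castSucc (dec i.succ P')) ?_ ?_ ?_ ?_ ?_).symm
  · intro P hP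
    rw [Finset.mem_filter] at hP
    obtain ⟨hPm, hP0⟩ := hP
    obtain ⟨Q, rfl⟩ : ∃ Q, P = inc i.castSucc Q :=
      ⟨dec i.castSucc P, (inc_dec _ _ (Nat.one_le_iff_ne_zero.2 hP0)).symm⟩
    show inc i.succ (dec i.castSucc (inc i.castSucc Q)) ∈ _
    rw [dec_inc]
    rw [Finset.mem_filter]
    have hsum := sum_Acal hPm
    rw [wS_inc] at hsum
    constructor
    · refine mem_Acal_of_sum ?_
      rw [wS_inc]
      simp only [Fin.coe_castSucc, Fin.val_succ] at hsum ⊢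
      omega
    · rw [inc_apply, if_pos rfl]
      omega
  · intro P' hP'
    rw [Finset.mem_filter] at hP'
    obtain ⟨hPm, hP0⟩ := hP'
    obtain ⟨Q, rfl⟩ : ∃ Q, P' = inc i.succ Q :=
      ⟨dec i.succ P', (inc_dec _ _ (Nat.one_le_iff_ne_zero.2 hP0)).symm⟩
    show inc i.castSucc (dec i.succ (inc i.succ Q)) ∈ _
    rw [dec_inc]
    rw [Finset.mem_filter]
    have hsum := sum_Acal hPm
    rw [wS_inc] at hsum
    constructor
    · refine mem_Acal_of_sum ?_
      rw [wS_inc]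
      simp only [Fin.coe_castSucc, Fin.val_succ] at hsum ⊢
      omega
    · rw [inc_apply, if_pos rfl]
      omega
  · intro P hP
    rw [Finset.mem_filter] at hP
    obtain ⟨hPm, hP0⟩ := hP
    obtain ⟨Q, rfl⟩ : ∃ Q, P = inc i.castSucc Q :=
      ⟨dec i.castSucc P, (inc_dec _ _ (Nat.one_le_iff_ne_zero.2 hP0)).symm⟩
    show inc i.castSucc (dec i.succ (inc i.succ (dec i.castSucc (inc i.castSucc Q)))) = _
    rw [dec_inc, dec_inc]
  · intro P' hP'
    rw [Finset.mem_filter] at hP'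
    obtain ⟨hPm, hP0⟩ := hP'
    obtain ⟨Q, rfl⟩ : ∃ Q, P' = inc i.succ Q :=
      ⟨dec i.succ P', (inc_dec _ _ (Nat.one_le_iff_ne_zero.2 hP0)).symm⟩
    show inc i.succ (dec i.castSucc (inc i.castSucc (dec i.succ (inc i.succ Q)))) = _
    rw [dec_inc, dec_inc]
  · intro P hP
    rw [Finset.mem_filter] at hP
    obtain ⟨hPm, hP0⟩ := hP
    obtain ⟨Q, rfl⟩ : ∃ Q, P = inc i.castSucc Q :=
      ⟨dec i.castSucc P, (inc_dec _ _ (Nat.one_le_iff_ne_zero.2 hP0)).symm⟩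
    beta_reduce
    rw [dec_inc]
    rw [Dterm]
    have hW : ∏ j' ∈ univ.erase i.castSucc, z ((j' : ℕ) + 1) ^ (inc i.castSucc Q j')
        = ∏ j' ∈ univ.erase i.castSucc, z ((j' : ℕ) + 1) ^ Q j' :=
      Finset.prod_congr rfl fun j' hj' => by
        rw [inc_apply, if_neg (Finset.ne_of_mem_erase hj')]
    rw [hW]
    have hPzQ : Pz z (l + 1) Q
        = z ((i.castSucc : ℕ) + 1) ^ Q i.castSucc *
          ∏ j' ∈ univ.erase i.castSucc, z ((j' : ℕ) + 1) ^ Q j' :=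
      (Finset.mul_prod_erase univ (fun j' : Fin (l + 1) => z ((j' : ℕ) + 1) ^ Q j')
        (mem_univ i.castSucc)).symm
    rw [co_inc, co_inc, co_succ l (l + 1) Q, Pz_inc, hPzQ]
    rw [inc_apply, if_pos rfl, inc_apply, if_pos rfl]
    simp only [Fin.coe_castSucc, Fin.val_succ, Nat.add_sub_cancel]
    have hl : ((l : ℝ) + 1) ≠ 0 := by positivity
    have h1 : ((Q i.castSucc : ℝ) + 1) ≠ 0 := by positivity
    have h2 : ((Q i.succ : ℝ) + 1) ≠ 0 := by positivity
    have h3 : (((i : ℕ) : ℝ) + 1) ≠ 0 := by positivity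
    have h4 : (((i : ℕ) : ℝ) + 1 + 1) ≠ 0 := by positivity
    push_cast
    field_simp

theorem LPoly_rec (l : ℕ) (z : ℕ → ℝ) :
    LPoly (l + 1) z = (- z 1 / 2) * LPoly l z +
      ∑ p ∈ Acal l l, co l l p * ∑ i : Fin l, Dterm z l p i := by
  have hpad1 : LPoly l z = ∑ P ∈ Acal (l + 1) l, co l (l + 1) P * Pz z (l + 1) P := by
    rw [LPoly_eq, sum_Acal_ext (fun P => co l (l + 1) P * Pz z (l + 1) P)]
    exact Finset.sum_congr rfl fun p _ => by rw [co_ext, Pz_ext]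
  have hpad2 : ∑ p ∈ Acal l l, co l l p * ∑ i : Fin l, Dterm z l p i
      = ∑ P ∈ Acal (l + 1) l, co l (l + 1) P * ∑ j : Fin (l + 1), Dterm z (l + 1) P j := by
    rw [sum_Acal_ext (fun P => co l (l + 1) P * ∑ j : Fin (l + 1), Dterm z (l + 1) P j)]
    exact (Finset.sum_congr rfl fun p _ => by rw [co_ext, Dsum_ext]).symm
  rw [hpad1, hpad2, LPoly_eq]
  have hL : ∑ P' ∈ Acal (l + 1) (l + 1), co (l + 1) (l + 1) P' * Pz z (l + 1) P'
      = ∑ j : Fin (l + 1), ∑ P' ∈ Acal (l + 1) (l + 1),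
          (((j : ℕ) : ℝ) + 1) * (P' j : ℝ) / ((l : ℝ) + 1) *
            (co (l + 1) (l + 1) P' * Pz z (l + 1) P') := by
    rw [Finset.sum_comm]
    refine Finset.sum_congr rfl fun P' hP' => ?_
    have hsum : ∑ j : Fin (l + 1), ((((j : ℕ) : ℝ) + 1) * (P' j : ℝ)) = (l : ℝ) + 1 := by
      have h := sum_Acal hP'
      have h2 : ((∑ j : Fin (l + 1), ((j : ℕ) + 1) * P' j : ℕ) : ℝ) = ((l + 1 : ℕ) : ℝ) := by
        rw [h]
      push_cast at h2
      exact h2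
    have hl : ((l : ℝ) + 1) ≠ 0 := by positivity
    rw [show (∑ x : Fin (l + 1), (((x : ℕ) : ℝ) + 1) * (P' x : ℝ) / ((l : ℝ) + 1) *
        (co (l + 1) (l + 1) P' * Pz z (l + 1) P'))
      = (∑ x : Fin (l + 1), (((x : ℕ) : ℝ) + 1) * (P' x : ℝ)) / ((l : ℝ) + 1) *
        (co (l + 1) (l + 1) P' * Pz z (l + 1) P') by
      rw [Finset.sum_div, Finset.sum_mul]]
    rw [hsum, div_self hl, one_mul]
  rw [hL, Fin.sum_univ_succ]
  have hR : ∑ P ∈ Acal (l + 1) l, co l (l + 1) P * ∑ j : Fin (l + 1), Dterm z (l + 1) P j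
      = ∑ j : Fin (l + 1), ∑ P ∈ Acal (l + 1) l, co l (l + 1) P * Dterm z (l + 1) P j := by
    rw [Finset.sum_comm]
    exact Finset.sum_congr rfl fun P _ => Finset.mul_sum _ _ _
  rw [hR, Fin.sum_univ_castSucc
    (f := fun j => ∑ P ∈ Acal (l + 1) l, co l (l + 1) P * Dterm z (l + 1) P j),
    Rlast l z, add_zero, T0_eq l z]
  congr 1
  exact Finset.sum_congr rfl fun i _ => Tsucc_eq l z i

lemma LPoly_zero (z : ℕ → ℝ) : LPoly 0 z = 1 := by
  rw [LPoly]
  rw [show ((Fintype.piFinset fun _ : Fin 0 => Finset.range (0 + 1)) |>.filter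
      (fun p => ∑ i : Fin 0, ((i : ℕ) + 1) * p i = 0)) = {fun i : Fin 0 => 0} from by
    ext p
    simp [Finset.eq_univ_iff_forall, funext_iff]]
  simp

section Analytic

variable {M : ℕ}

/-- the function `Σ_k` scaled by `-n`. -/
noncomputable def Zf (a : Fin M → ℝ) (n : ℤ) (t : ℝ) : ℕ → ℝ :=
  fun k => (-(n : ℝ)) * ∑ j : Fin M, 1 / (a j - t) ^ k

noncomputable def Ff (a : Fin M → ℝ) (n : ℤ) (t : ℝ) : ℝ :=
  ((Real.sqrt (∏ j : Fin M, (t - a j)))⁻¹) ^ n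

lemma hasDerivAt_term (a : Fin M → ℝ) {t : ℝ} (ht : ∀ j, a j ≠ t) (k : ℕ) (j : Fin M) :
    HasDerivAt (fun u => 1 / (a j - u) ^ k) ((k : ℝ) * (1 / (a j - t) ^ (k + 1))) t := by
  have hx : a j - t ≠ 0 := sub_ne_zero_of_ne (ht j)
  have h1 : HasDerivAt (fun u : ℝ => a j - u) (-1) t := (hasDerivAt_id t).const_sub (a j)
  have h2 := h1.fun_pow k
  have h3 := h2.fun_inv (pow_ne_zero k hx)
  have h4 : (fun u => 1 / (a j - u) ^ k) = fun u => ((a j - u) ^ k)⁻¹ := by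
    funext u; rw [one_div]
  rw [h4]
  refine h3.congr_deriv ?_
  rcases Nat.eq_zero_or_pos k with rfl | hk
  · simp
  · obtain ⟨m, rfl⟩ := Nat.exists_eq_add_of_le hk
    have : 1 + m - 1 = m := by omega
    rw [this]
    field_simp
    ring

lemma hasDerivAt_Zf (a : Fin M → ℝ) (n : ℤ) {t : ℝ} (ht : ∀ j, a j ≠ t) (k : ℕ) :
    HasDerivAt (fun u => Zf a n u k) ((k : ℝ) * Zf a n t (k + 1)) t := by
  have H : HasDerivAt (fun u => (-(n : ℝ)) * ∑ j : Fin M, 1 / (a j - u) ^ k)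
      ((-(n : ℝ)) * ∑ j : Fin M, ((k : ℝ) * (1 / (a j - t) ^ (k + 1)))) t :=
    HasDerivAt.const_mul _ (HasDerivAt.fun_sum fun j _ => hasDerivAt_term a ht k j)
  have heq : (-(n : ℝ)) * ∑ j : Fin M, ((k : ℝ) * (1 / (a j - t) ^ (k + 1)))
      = (k : ℝ) * Zf a n t (k + 1) := by
    rw [Zf, ← Finset.mul_sum]
    ring
  rw [← heq]
  exact H

lemma prod_sub_pos_ne (a : Fin M → ℝ) {t : ℝ} (hpos : 0 < ∏ j : Fin M, (t - a j)) :
    ∀ j, a j ≠ t := by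
  intro j hj
  have : (∏ j : Fin M, (t - a j)) = 0 :=
    Finset.prod_eq_zero (Finset.mem_univ j) (by rw [hj, sub_self])
  rw [this] at hpos
  exact lt_irrefl _ hpos

lemma hasDerivAt_Ff (a : Fin M → ℝ) (n : ℤ) {t : ℝ}
    (hpos : 0 < ∏ j : Fin M, (t - a j)) :
    HasDerivAt (Ff a n) (Ff a n t * (- Zf a n t 1 / 2)) t := by
  have ht := prod_sub_pos_ne a hpos
  set f : ℝ → ℝ := fun u => ∏ j : Fin M, (u - a j) with hf
  have hfd : HasDerivAt f (∑ j : Fin M, ∏ k ∈ univ.erase j, (t - a k)) t := by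
    have h := HasDerivAt.fun_finset_prod (u := (univ : Finset (Fin M)))
      (f := fun j u => u - a j) (f' := fun _ => 1)
      (fun j _ => (hasDerivAt_id t).sub_const (a j))
    simpa using h
  set d : ℝ := ∑ j : Fin M, ∏ k ∈ univ.erase j, (t - a k) with hd
  have hft : 0 < f t := hpos
  have hsq : HasDerivAt (fun u => Real.sqrt (f u)) (d / (2 * Real.sqrt (f t))) t :=
    hfd.sqrt hft.ne'
  set u : ℝ := Real.sqrt (f t) with hu
  have hupos : 0 < u := Real.sqrt_pos.2 hft
  have huu : u * u = f t := Real.mul_self_sqrt hft.le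
  have hFeq : Ff a n = fun v => (Real.sqrt (f v)) ^ (-n) := by
    funext v
    rw [Ff, inv_zpow']
  have hz := (hasDerivAt_zpow (-n) u (Or.inl hupos.ne')).comp t hsq
  rw [hFeq]
  refine hz.congr_deriv (Eq.symm ?_)
  -- value equality
  have hks : (∑ j : Fin M, 1 / (a j - t)) * f t = - d := by
    rw [hd, Finset.sum_mul, ← Finset.sum_neg_distrib]
    refine Finset.sum_congr rfl fun j _ => ?_
    have hx : a j - t ≠ 0 := sub_ne_zero_of_ne (ht j)
    have hfj : f t = (t - a j) * ∏ k ∈ univ.erase j, (t - a k) :=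
      (Finset.mul_prod_erase univ _ (Finset.mem_univ j)).symm
    rw [hfj]
    field_simp
    ring
  show u ^ (-n) * (- Zf a n t 1 / 2) = ((-n : ℤ) : ℝ) * u ^ (-n - 1) * (d / (2 * u))
  push_cast
  rw [zpow_sub_one₀ hupos.ne']
  rw [Zf]
  have hsum : ∑ j : Fin M, 1 / (a j - t) ^ 1 = - d / f t := by
    rw [eq_div_iff hft.ne']
    simpa using hks
  rw [hsum]
  rw [← huu]
  set v : ℝ := u ^ (-n) with hv
  field_simp



lemma main_induction (a : Fin M → ℝ) (s : Set ℝ) (hs : IsOpen s)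
    (hpos : ∀ t ∈ s, 0 < ∏ j : Fin M, (t - a j)) (n : ℤ) (l : ℕ) :
    ∀ t ∈ s, iteratedDeriv l (Ff a n) t = Ff a n t * LPoly l (Zf a n t) := by
  induction l with
  | zero =>
    intro t ht
    rw [iteratedDeriv_zero, LPoly_zero, mul_one]
  | succ l IH =>
    intro t ht
    rw [iteratedDeriv_succ]
    have hev : iteratedDeriv l (Ff a n) =ᶠ[nhds t]
        fun u => Ff a n u * LPoly l (Zf a n u) :=
      Filter.eventually_of_mem (hs.mem_nhds ht) (fun u hu => IH u hu)
    rw [hev.deriv_eq]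
    have hne : ∀ j, a j ≠ t := prod_sub_pos_ne a (hpos t ht)
    have hL : HasDerivAt (fun u => LPoly l (Zf a n u))
        (∑ p ∈ Acal l l, co l l p * ∑ i : Fin l, Dterm (Zf a n t) l p i) t := by
      have hfun : (fun u => LPoly l (Zf a n u))
          = fun u => ∑ p ∈ Acal l l, co l l p * Pz (Zf a n u) l p :=
        funext fun u => LPoly_eq l _
      rw [hfun]
      refine HasDerivAt.fun_sum fun p hp => ?_
      have hprod : HasDerivAt (fun u => ∏ i : Fin l, (Zf a n u ((i : ℕ) + 1)) ^ p i)
          (∑ i : Fin l, (∏ j ∈ univ.erase i, Zf a n t ((j : ℕ) + 1) ^ p j) •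
            ((p i : ℝ) * Zf a n t ((i : ℕ) + 1) ^ (p i - 1) *
              ((((i : ℕ) + 1 : ℕ) : ℝ) * Zf a n t ((i : ℕ) + 1 + 1)))) t :=
        HasDerivAt.fun_finset_prod fun i _ => (hasDerivAt_Zf a n hne ((i : ℕ) + 1)).pow (p i)
      have heq : (∑ i : Fin l, (∏ j ∈ univ.erase i, Zf a n t ((j : ℕ) + 1) ^ p j) •
            ((p i : ℝ) * Zf a n t ((i : ℕ) + 1) ^ (p i - 1) *
              ((((i : ℕ) + 1 : ℕ) : ℝ) * Zf a n t ((i : ℕ) + 1 + 1))))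
          = ∑ i : Fin l, Dterm (Zf a n t) l p i := by
        refine Finset.sum_congr rfl fun i _ => ?_
        rw [Dterm, smul_eq_mul, show (i : ℕ) + 1 + 1 = (i : ℕ) + 2 from rfl]
        push_cast
        ring
      rw [heq] at hprod
      exact HasDerivAt.const_mul _ hprod
    have hF := hasDerivAt_Ff a n (hpos t ht)
    have hmul := (hF.fun_mul hL).deriv
    rw [hmul, LPoly_rec]
    ring

end Analytic

end Stmt12Aux


theorem stmt12 (M : ℕ) (a : Fin M → ℝ) (s : Set ℝ) (hs : IsOpen s)
    (hpos : ∀ t ∈ s, 0 < ∏ j : Fin M, (t - a j))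
    (y₀ : ℝ) (hy₀ : y₀ ∈ s) (ha : ∀ j, a j ≠ y₀) (l : ℕ) (n : ℤ) :
    iteratedDeriv l (fun t => ((Real.sqrt (∏ j : Fin M, (t - a j)))⁻¹) ^ n) y₀ =
      ((Real.sqrt (∏ j : Fin M, (y₀ - a j)))⁻¹) ^ n *
        LPoly l (fun k => (-(n : ℝ)) * ∑ j : Fin M, 1 / (a j - y₀) ^ k) := by
  exact Stmt12Aux.main_induction a s hs hpos n l y₀ hy₀
end
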